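/- With the same setup (λ, λ̂ differing by a box move from row i to row î > i; μ, μ̂ differing by the same move; λ∖μ = λ̂∖μ̂ = (r,c)), if r > î then for any N ≥ ℓ(λ̂): s_λ(1^N)·s_{μ̂}(1^N) ≤ s_{λ̂}(1^N)·s_μ(1^N). -/

import Mathlib

open scoped BigOperators

def isPartition (f : ℕ → ℕ) : Prop :=
  (∀ ⦃a b : ℕ⦄, a ≤ b → f b ≤ f a) ∧ ∃ N, ∀ a, N ≤ a → f a = 0

noncomputable def psize (f : ℕ → ℕ) : ℕ := ∑ᶠ a, f a

def addBox (mu lam : ℕ → ℕ) : Prop := ∃ r, lam = Function.update mu r (mu r + 1)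

noncomputable def dimY (lam : ℕ → ℕ) : ℕ :=
  Set.ncard { p : ℕ → ℕ → ℕ |
    p 0 = (fun _ => 0) ∧ (∀ k, isPartition (p k)) ∧
    (∀ k, k < psize lam → addBox (p k) (p (k + 1))) ∧
    (∀ k, psize lam ≤ k → p k = lam) }

def dominates (lam mu : ℕ → ℕ) : Prop :=
  ∀ k, ∑ a ∈ Finset.range k, mu a ≤ ∑ a ∈ Finset.range k, lam a

def moveBox (lam hatlam : ℕ → ℕ) (i hi : ℕ) : Prop :=
  lam i = hatlam i + 1 ∧ hatlam hi = lam hi + 1 ∧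
  ∀ a, a ≠ i → a ≠ hi → lam a = hatlam a

noncomputable def schurOnes (N : ℕ) (lam : ℕ → ℕ) : ℕ :=
  Set.ncard { T : ℕ → ℕ → ℕ |
    (∀ i j, j < lam i → 1 ≤ T i j ∧ T i j ≤ N) ∧
    (∀ i j, j + 1 < lam i → T i j ≤ T i (j + 1)) ∧
    (∀ i j, j < lam (i + 1) → T i j < T (i + 1) j) ∧
    (∀ i j, lam i ≤ j → T i j = 0) }

noncomputable def projStep (rho : (ℕ → ℕ) → ℝ) : (ℕ → ℕ) → ℝ :=
  fun mu => ∑ᶠ l ∈ { l : ℕ → ℕ | addBox mu l }, ((dimY mu : ℝ) / (dimY l : ℝ)) * rho l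

def isMeasureOn (m : ℕ) (rho : (ℕ → ℕ) → ℝ) : Prop :=
  (∀ f, 0 ≤ rho f) ∧ ∀ f, rho f ≠ 0 → isPartition f ∧ psize f = m

def stochDom (m : ℕ) (rho rho' : (ℕ → ℕ) → ℝ) : Prop :=
  ∀ U : Set (ℕ → ℕ),
    (∀ a ∈ U, ∀ b, isPartition b → psize b = m → dominates b a → b ∈ U) →
    ∑ᶠ f ∈ U, rho' f ≤ ∑ᶠ f ∈ U, rho f

/-!
Write `ℓ_a = λ_a + N - 1 - a`. Sorting the cells of a tableau with entries `≤ N + 1` by whether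
they hold `N + 1` gives the branching rule `s_λ(1^(N+1)) = ∑_ν s_ν(1^N)` over the shapes `ν`
interlacing `λ`. By multilinearity and the hockey-stick identity this makes `s_λ(1^N)` the
binomial determinant `det (ℓ_(N-1-a) choose b)`, a Vandermonde determinant in disguise, whence
`s_λ(1^N) · ∏_(b<N) b! = ∏_(a<b) (ℓ_a - ℓ_b)`.

In these coordinates `λ = μ + e_r`, `λ̂ = μ̂ + e_r` and `μ̂ = μ + e_î - e_i`. Comparing the two
sides factor by factor, every pair `(a, b)` contributes equally except `(i, r)` and `(î, r)`.
With `d = ℓ_i - ℓ_r` and `d̂ = ℓ_î - ℓ_r` computed for `μ`, these two contribute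
`(d-1)² (d̂² - 1)` on the left and `((d-1)² - 1) d̂²` on the right, and the difference
`(d-1)² - d̂²` is nonnegative because `d̂ + 2 < d`.
-/

open Finset Matrix

def ssyt (N : ℕ) (f : ℕ → ℕ) : Set (ℕ → ℕ → ℕ) :=
  { T | (∀ i j, j < f i → 1 ≤ T i j ∧ T i j ≤ N) ∧
    (∀ i j, j + 1 < f i → T i j ≤ T i (j + 1)) ∧
    (∀ i j, j < f (i + 1) → T i j < T (i + 1) j) ∧
    (∀ i j, f i ≤ j → T i j = 0) }

theorem schurOnes_eq_ncard (N : ℕ) (f : ℕ → ℕ) : schurOnes N f = (ssyt N f).ncard := rfl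

section Tableaux

variable {N : ℕ} {f : ℕ → ℕ} {T : ℕ → ℕ → ℕ}

lemma ssyt_row_mono (hT : T ∈ ssyt N f) {a j k : ℕ} (hjk : j ≤ k) (hk : k < f a) :
    T a j ≤ T a k := by
  induction k, hjk using Nat.le_induction with
  | base => rfl
  | succ k _ ih => exact (ih (by omega)).trans (hT.2.1 a k hk)

lemma add_one_le_ssyt_col_zero (hf : Antitone f) (hT : T ∈ ssyt N f) {a : ℕ} (ha : 0 < f a) :
    a + 1 ≤ T a 0 := by
  induction a with
  | zero => exact (hT.1 0 0 ha).1
  | succ a ih => exact (ih (ha.trans_le (hf a.le_succ))).trans_lt (hT.2.2.1 a 0 ha)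

lemma ssyt_le (hT : T ∈ ssyt N f) (a j : ℕ) : T a j ≤ N := by
  rcases lt_or_ge j (f a) with h | h
  · exact (hT.1 a j h).2
  · simp [hT.2.2.2 a j h]

lemma ssyt_finite (hf : Antitone f) {K : ℕ} (hK : ∀ a, K ≤ a → f a = 0) :
    (ssyt N f).Finite := by
  refine Set.Finite.of_finite_image (f := fun T (p : Fin K × Fin (f 0)) => T p.1 p.2)
    ((Set.finite_Iic fun _ => N).subset ?_) fun T hT S hS hTS => ?_
  · rintro _ ⟨T, hT, rfl⟩ p
    exact ssyt_le hT _ _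
  · funext a j
    by_cases hin : a < K ∧ j < f 0
    · exact congrFun hTS (⟨a, hin.1⟩, ⟨j, hin.2⟩)
    · have hj : f a ≤ j := by
        by_cases ha : a < K
        · exact (hf a.zero_le).trans (by omega)
        · simp [hK a (by omega)]
      rw [hT.2.2.2 a j hj, hS.2.2.2 a j hj]

lemma ssyt_eq_singleton_zero (hf : ∀ a, f a = 0) : ssyt N f = {0} := by
  ext T
  simp only [Set.mem_singleton_iff]
  refine ⟨fun hT => funext₂ fun a j => hT.2.2.2 a j (by simp [hf]), ?_⟩
  rintro rfl
  refine ⟨?_, ?_, ?_, ?_⟩ <;> simp [hf]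

end Tableaux

lemma lt_card_filter_range_iff {P : ℕ → Prop} [DecidablePred P] {m : ℕ}
    (hP : ∀ j k, j ≤ k → k < m → P k → P j) {j : ℕ} :
    j < #{i ∈ range m | P i} ↔ j < m ∧ P j := by
  constructor
  · intro hj
    by_contra hPj
    have hsub : {i ∈ range m | P i} ⊆ range j := by
      intro i hi
      simp only [mem_filter, mem_range] at hi ⊢
      by_contra hji
      exact hPj ⟨by omega, hP j i (by omega) hi.1 hi.2⟩
    simpa using (card_le_card hsub).trans_lt' hj
  · rintro ⟨hjm, hPj⟩
    have hsub : range (j + 1) ⊆ {i ∈ range m | P i} := by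
      intro i hi
      simp only [mem_filter, mem_range] at hi ⊢
      exact ⟨by omega, hP i j (by omega) hjm hPj⟩
    simpa using card_le_card hsub

def extendByZero {n : ℕ} (p : Fin n → ℕ) (a : ℕ) : ℕ := if h : a < n then p ⟨a, h⟩ else 0

@[simp]
lemma extendByZero_coe {n : ℕ} (p : Fin n → ℕ) (a : Fin n) : extendByZero p a = p a := by
  simp [extendByZero]

def rowCount (N : ℕ) (f : ℕ → ℕ) (T : ℕ → ℕ → ℕ) (a : Fin N) : ℕ := #{j ∈ range (f a) | T a j ≤ N}

def truncate (q : ℕ → ℕ) (T : ℕ → ℕ → ℕ) (a j : ℕ) : ℕ := if j < q a then T a j else 0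

def fillTop (f q : ℕ → ℕ) (N : ℕ) (S : ℕ → ℕ → ℕ) (a j : ℕ) : ℕ :=
  if j < q a then S a j else if j < f a then N + 1 else 0

def interlacing (N : ℕ) (f : ℕ → ℕ) : Finset (Fin N → ℕ) :=
  Fintype.piFinset fun a => Icc (f (a + 1)) (f a)

section Branching

variable {N : ℕ} {f q : ℕ → ℕ} {T S : ℕ → ℕ → ℕ}

lemma lt_extendByZero_rowCount_iff (hf : Antitone f) (hvan : ∀ a, N + 1 ≤ a → f a = 0)
    (hT : T ∈ ssyt (N + 1) f) (a j : ℕ) :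
    j < extendByZero (rowCount N f T) a ↔ j < f a ∧ T a j ≤ N := by
  unfold extendByZero
  split_ifs with ha
  · exact lt_card_filter_range_iff fun j k hjk hk hTk => (ssyt_row_mono hT hjk hk).trans hTk
  · simp only [Nat.not_lt_zero, false_iff, not_and, not_le]
    intro hj
    have ha : a = N := by
      by_contra
      simp [hvan a (by omega)] at hj
    subst ha
    -- column strictness pushes the entries of row `N` above `N`
    exact (add_one_le_ssyt_col_zero hf hT (by omega)).trans (ssyt_row_mono hT (Nat.zero_le j) hj)

lemma rowCount_eq_iff (hf : Antitone f) (hvan : ∀ a, N + 1 ≤ a → f a = 0)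
    (hT : T ∈ ssyt (N + 1) f) (p : Fin N → ℕ) :
    rowCount N f T = p ↔ ∀ a j, j < extendByZero p a ↔ j < f a ∧ T a j ≤ N := by
  constructor
  · rintro rfl
    exact lt_extendByZero_rowCount_iff hf hvan hT
  · intro h
    funext a
    have := eq_of_forall_lt_iff fun j =>
      (lt_extendByZero_rowCount_iff hf hvan hT a j).trans (h a j).symm
    simpa using this

lemma truncate_mem_ssyt (hq : ∀ a, f (a + 1) ≤ q a ∧ q a ≤ f a) (hT : T ∈ ssyt (N + 1) f)
    (hTq : ∀ a j, j < q a ↔ j < f a ∧ T a j ≤ N) : truncate q T ∈ ssyt N q := by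
  refine ⟨fun a j hj => ?_, fun a j hj => ?_, fun a j hj => ?_, fun a j hj => ?_⟩
  · obtain ⟨hjf, hTN⟩ := (hTq a j).1 hj
    simpa [truncate, hj, hTN] using (hT.1 a j hjf).1
  · have hj' : j + 1 < f a := ((hTq a (j + 1)).1 hj).1
    simpa [truncate, hj, show j < q a by omega] using hT.2.1 a j hj'
  · have hja : j < q a := by have := hq a; have := hq (a + 1); omega
    have hjf : j < f (a + 1) := by have := hq (a + 1); omega
    simpa [truncate, hj, hja] using hT.2.2.1 a j hjf
  · simp [truncate, not_lt.2 hj]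

lemma eq_of_truncate_eq (hT : T ∈ ssyt (N + 1) f) (hTq : ∀ a j, j < q a ↔ j < f a ∧ T a j ≤ N)
    (hS : S ∈ ssyt (N + 1) f) (hSq : ∀ a j, j < q a ↔ j < f a ∧ S a j ≤ N)
    (h : truncate q T = truncate q S) : T = S := by
  funext a j
  by_cases hjq : j < q a
  · simpa [truncate, hjq] using congrFun₂ h a j
  by_cases hjf : j < f a
  · -- outside `q`, both entries exceed `N`, so they equal the largest value `N + 1`
    have := (hT.1 a j hjf).2; have := (hS.1 a j hjf).2
    have := (hTq a j).not.1 hjq; have := (hSq a j).not.1 hjq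
    simp only [not_and, not_le] at *
    omega
  · rw [hT.2.2.2 a j (by omega), hS.2.2.2 a j (by omega)]

lemma fillTop_mem_ssyt (hq : ∀ a, f (a + 1) ≤ q a ∧ q a ≤ f a) (hS : S ∈ ssyt N q) :
    fillTop f q N S ∈ ssyt (N + 1) f := by
  refine ⟨fun a j hj => ?_, fun a j hj => ?_, fun a j hj => ?_, fun a j hj => ?_⟩
  · by_cases hjq : j < q a
    · have := hS.1 a j hjq
      simp only [fillTop, hjq, if_true]
      omega
    · simp [fillTop, hjq, hj]
  · by_cases hjq : j + 1 < q a
    · simpa [fillTop, hjq, show j < q a by omega] using hS.2.1 a j hjq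
    by_cases hjq' : j < q a
    · have := (hS.1 a j hjq').2
      simp only [fillTop, hjq, hjq', hj, if_true, if_false]
      omega
    · simp [fillTop, hjq, hjq', hj, show j < f a by omega]
  · have hja : j < q a := by have := hq a; omega
    by_cases hjq : j < q (a + 1)
    · simpa [fillTop, hjq, hja] using hS.2.2.1 a j hjq
    · have := (hS.1 a j hja).2
      simp only [fillTop, hjq, hja, hj, if_true, if_false]
      omega
  · simp [fillTop, show ¬ j < q a by have := hq a; omega, not_lt.2 hj]

lemma lt_iff_lt_and_fillTop_le (hq : ∀ a, f (a + 1) ≤ q a ∧ q a ≤ f a) (hS : S ∈ ssyt N q)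
    (a j : ℕ) :
    j < q a ↔ j < f a ∧ fillTop f q N S a j ≤ N := by
  by_cases hjq : j < q a
  · simp [fillTop, hjq, (hS.1 a j hjq).2, hjq.trans_le (hq a).2]
  · simp +contextual [fillTop, hjq]

lemma truncate_fillTop (hS : S ∈ ssyt N q) : truncate q (fillTop f q N S) = S := by
  funext a j
  by_cases hjq : j < q a
  · simp [truncate, fillTop, hjq]
  · simp [truncate, hjq, hS.2.2.2 a j (not_lt.1 hjq)]

lemma extendByZero_interlace (hvan : ∀ a, N + 1 ≤ a → f a = 0) {p : Fin N → ℕ}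
    (hp : p ∈ interlacing N f) (a : ℕ) :
    f (a + 1) ≤ extendByZero p a ∧ extendByZero p a ≤ f a := by
  unfold extendByZero
  split_ifs with ha
  · simpa using Fintype.mem_piFinset.1 hp ⟨a, ha⟩
  · simp [hvan (a + 1) (by omega)]

lemma rowCount_mem_Icc (hf : Antitone f) (hT : T ∈ ssyt (N + 1) f) (a : Fin N) :
    rowCount N f T a ∈ Icc (f (a + 1)) (f a) := by
  unfold rowCount
  have hP : ∀ j k, j ≤ k → k < f a → T a k ≤ N → T a j ≤ N :=
    fun j k hjk hk hTk => (ssyt_row_mono hT hjk hk).trans hTk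
  refine mem_Icc.2 ⟨?_, (card_filter_le _ _).trans_eq (card_range _)⟩
  rcases Nat.eq_zero_or_pos (f (a + 1)) with h | h
  · simp [h]
  · -- the last cell of row `a + 1` lies below a cell of row `a` holding at most `N`
    have hcol := hT.2.2.1 a (f (a + 1) - 1) (by omega)
    have hbound := (hT.1 (a + 1) (f (a + 1) - 1) (by omega)).2
    have := (lt_card_filter_range_iff hP).2 ⟨(Nat.sub_lt h one_pos).trans_le (hf (Nat.le_succ a)),
      Nat.le_of_lt_succ (hcol.trans_le hbound)⟩
    omega

lemma bijOn_truncate (hf : Antitone f) (hvan : ∀ a, N + 1 ≤ a → f a = 0) {p : Fin N → ℕ}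
    (hp : p ∈ interlacing N f) :
    Set.BijOn (truncate (extendByZero p)) {T | T ∈ ssyt (N + 1) f ∧ rowCount N f T = p}
      (ssyt N (extendByZero p)) := by
  have hq := extendByZero_interlace hvan hp
  refine ⟨fun T ⟨hT, hTp⟩ => ?_, fun T ⟨hT, hTp⟩ S ⟨hS, hSp⟩ h => ?_, fun S hS => ?_⟩
  · exact truncate_mem_ssyt hq hT ((rowCount_eq_iff hf hvan hT p).1 hTp)
  · exact eq_of_truncate_eq hT ((rowCount_eq_iff hf hvan hT p).1 hTp)
      hS ((rowCount_eq_iff hf hvan hS p).1 hSp) h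
  · have hT := fillTop_mem_ssyt (f := f) hq hS
    exact ⟨_, ⟨hT, (rowCount_eq_iff hf hvan hT p).2 (lt_iff_lt_and_fillTop_le hq hS)⟩,
      truncate_fillTop hS⟩

theorem ncard_ssyt_succ (hf : Antitone f) (hvan : ∀ a, N + 1 ≤ a → f a = 0) :
    (ssyt (N + 1) f).ncard = ∑ p ∈ interlacing N f,
      (ssyt N (extendByZero p)).ncard := by
  classical
  have hfin := ssyt_finite (N := N + 1) hf hvan
  rw [Set.ncard_eq_toFinset_card _ hfin, card_eq_sum_card_fiberwise (f := rowCount N f)]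
  · refine sum_congr rfl fun p hp => ?_
    rw [← Set.ncard_coe_finset, ← (bijOn_truncate hf hvan hp).ncard_eq]
    congr 1
    ext T
    simp
  · intro T hT
    exact mem_coe.2 <| Fintype.mem_piFinset.2 <|
      rowCount_mem_Icc hf ((Set.Finite.mem_toFinset hfin).1 hT)

end Branching

def ltPairs (n : ℕ) : Finset (Fin n × Fin n) := {p | p.1 < p.2}

@[simp]
lemma mem_ltPairs {n : ℕ} {p : Fin n × Fin n} : p ∈ ltPairs n ↔ p.1 < p.2 := by
  simp [ltPairs]

lemma sum_Ico_choose_add (k b : ℕ) {L U : ℕ} (h : L ≤ U) :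
    ∑ y ∈ Ico L U, ((y + k).choose b : ℤ) = (U + k).choose (b + 1) - (L + k).choose (b + 1) := by
  induction U, h using Nat.le_induction with
  | base => simp
  | succ U hLU ih =>
    rw [sum_Ico_succ_top hLU, ih, add_right_comm, Nat.choose_succ_succ' (U + k)]
    push_cast
    ring

lemma sum_piFinset_comp_rev {M : Type*} [AddCommMonoid M] {n : ℕ} (t : Fin n → Finset ℕ)
    (F : (Fin n → ℕ) → M) :
    ∑ p ∈ Fintype.piFinset t, F (p ∘ Fin.rev) = ∑ p ∈ Fintype.piFinset (t ∘ Fin.rev), F p :=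
  sum_nbij' (· ∘ Fin.rev) (· ∘ Fin.rev)
    (fun p hp => Fintype.mem_piFinset.2 fun a => by simpa using Fintype.mem_piFinset.1 hp a.rev)
    (fun p hp => Fintype.mem_piFinset.2 fun a => by simpa using Fintype.mem_piFinset.1 hp a.rev)
    (fun p _ => by simp [Function.comp_def]) (fun p _ => by simp [Function.comp_def])
    fun _ _ => rfl

lemma det_sum_piFinset {n : ℕ} (t : Fin n → Finset ℕ) (g : Fin n → ℕ → Fin n → ℤ) :
    ∑ p ∈ Fintype.piFinset t, det (of fun a b => g a (p a) b) =
      det (of fun a b => ∑ y ∈ t a, g a y b) := by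
  simp only [← det_transpose (of _), det_apply', transpose_apply, of_apply, prod_univ_sum,
    mul_sum]
  exact sum_comm

lemma det_choose_succ {n : ℕ} (c : Fin (n + 1) → ℕ) :
    det (of fun a b : Fin (n + 1) => ((c a).choose b : ℤ)) =
      det (of fun a b : Fin n =>
        ((c a.succ).choose (b + 1) - (c a.castSucc).choose (b + 1) : ℤ)) := by
  refine (det_eq_of_forall_row_eq_smul_add_pred (fun _ => 1)
    (A := of fun a b => ((c a).choose b : ℤ))
    (B := of (Fin.cases (fun b => ((c 0).choose b : ℤ))
      fun a b => (c a.succ).choose b - (c a.castSucc).choose b)) (fun _ => rfl)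
    (fun a b => by simp)).trans ?_
  simp [det_succ_column_zero, Fin.sum_univ_succ, submatrix]

lemma det_choose_mul_prod_factorial {n : ℕ} (c : Fin n → ℕ) :
    det (of fun a b : Fin n => ((c a).choose b : ℤ)) * ∏ b : Fin n, ((b : ℕ).factorial : ℤ) =
      det (vandermonde fun a => (c a : ℤ)) := by
  rw [det_eval_matrixOfPolynomials_eq_det_vandermonde _ _ (descPochhammer_natDegree ℤ ·)
    (monic_descPochhammer ℤ ·), mul_comm, ← det_mul_row]
  congr 2 with a b
  simp [descPochhammer_eval_eq_descFactorial, Nat.descFactorial_eq_factorial_mul_choose]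

lemma det_vandermonde_comp_rev {R : Type*} [CommRing R] {n : ℕ} (x : Fin n → R) :
    det (vandermonde (x ∘ Fin.rev)) = ∏ p ∈ ltPairs n, (x p.1 - x p.2) := by
  rw [det_vandermonde, ← prod_finset_product' (ltPairs n) univ Ioi (by simp [ltPairs])]
  exact prod_nbij' (fun p => (p.2.rev, p.1.rev)) (fun p => (p.2.rev, p.1.rev))
    (by simp [ltPairs]) (by simp [ltPairs]) (by simp) (by simp) (by simp)

def shiftedParts (N : ℕ) (f : ℕ → ℕ) (a : Fin N) : ℕ := f a + (N - 1 - a)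

lemma shiftedParts_rev {N : ℕ} (f : ℕ → ℕ) (a : Fin N) : shiftedParts N f a.rev = f a.rev + a := by
  simp only [shiftedParts, Fin.val_rev]
  omega

lemma extendByZero_antitone {N : ℕ} {f : ℕ → ℕ} (hvan : ∀ a, N + 1 ≤ a → f a = 0)
    {p : Fin N → ℕ} (hp : p ∈ interlacing N f) :
    Antitone (extendByZero p) :=
  antitone_nat_of_succ_le fun a =>
    (extendByZero_interlace hvan hp (a + 1)).2.trans (extendByZero_interlace hvan hp a).1

/-- The rows are listed bottom-up, so that the `ℓ`'s increase down the matrix and no sign appears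
when the first column is cleared. -/
theorem ncard_ssyt_eq_det {N : ℕ} {f : ℕ → ℕ} (hf : Antitone f) (hvan : ∀ a, N ≤ a → f a = 0) :
    ((ssyt N f).ncard : ℤ) =
      det (of fun a b : Fin N => ((shiftedParts N f a.rev).choose b : ℤ)) := by
  induction N generalizing f with
  | zero => simp [ssyt_eq_singleton_zero fun a => hvan a a.zero_le]
  | succ N ih =>
    rw [ncard_ssyt_succ hf hvan, det_choose_succ]
    push_cast
    calc ∑ p ∈ interlacing N f,
          ((ssyt N (extendByZero p)).ncard : ℤ)
        = ∑ p ∈ interlacing N f,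
            det (of fun a b : Fin N => (((p ∘ Fin.rev) a + a).choose b : ℤ)) := by
          refine sum_congr rfl fun p hp => ?_
          rw [ih (extendByZero_antitone hvan hp) fun a ha => by simp [extendByZero, ha.not_gt]]
          congr 2 with a b
          simp only [shiftedParts_rev, extendByZero_coe, Function.comp_apply]
      _ = det (of fun a b : Fin N =>
            ∑ y ∈ Icc (f (a.rev + 1)) (f a.rev), ((y + a).choose b : ℤ)) := by
          rw [interlacing, sum_piFinset_comp_rev (fun a => Icc (f (a + 1)) (f a))
            fun p => det (of fun a b : Fin N => ((p a + a).choose b : ℤ))]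
          exact det_sum_piFinset _ fun a y b => ((y + a).choose b : ℤ)
      _ = _ := by
          congr 1 with a b
          simp only [of_apply]
          rw [← Ico_add_one_right_eq_Icc,
            sum_Ico_choose_add _ _ ((hf (Nat.le_add_right _ 1)).trans (Nat.le_add_right _ 1))]
          simp only [shiftedParts_rev]
          simp only [Fin.rev_succ, Fin.rev_castSucc, Fin.val_castSucc, Fin.val_succ]
          ring_nf

theorem schurOnes_mul_prod_factorial {N : ℕ} {f : ℕ → ℕ} (hf : Antitone f)
    (hvan : ∀ a, N ≤ a → f a = 0) :
    (schurOnes N f : ℤ) * ∏ b : Fin N, ((b : ℕ).factorial : ℤ) =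
      ∏ p ∈ ltPairs N, ((shiftedParts N f p.1 : ℤ) - shiftedParts N f p.2) := by
  rw [schurOnes_eq_ncard, ncard_ssyt_eq_det hf hvan, det_choose_mul_prod_factorial]
  exact det_vandermonde_comp_rev fun a => (shiftedParts N f a : ℤ)

lemma prod_mul_prod_le_prod_mul_prod {ι R : Type*} [DecidableEq ι] [CommSemiring R] [PartialOrder R]
    [IsOrderedRing R] {s t : Finset ι} (hts : t ⊆ s) {f g f' g' : ι → R}
    (heq : ∀ p ∈ s \ t, f p * g p = f' p * g' p) (hnonneg : ∀ p ∈ s \ t, 0 ≤ f p * g p)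
    (hle : (∏ p ∈ t, f p) * ∏ p ∈ t, g p ≤ (∏ p ∈ t, f' p) * ∏ p ∈ t, g' p) :
    (∏ p ∈ s, f p) * ∏ p ∈ s, g p ≤ (∏ p ∈ s, f' p) * ∏ p ∈ s, g' p := by
  simp only [← prod_sdiff hts (f := f), ← prod_sdiff hts (f := g), ← prod_sdiff hts (f := f'),
    ← prod_sdiff hts (f := g')]
  calc (∏ p ∈ s \ t, f p) * (∏ p ∈ t, f p) * ((∏ p ∈ s \ t, g p) * ∏ p ∈ t, g p)
      = (∏ p ∈ s \ t, f p * g p) * ((∏ p ∈ t, f p) * ∏ p ∈ t, g p) := by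
        rw [prod_mul_distrib]; ring
    _ ≤ (∏ p ∈ s \ t, f p * g p) * ((∏ p ∈ t, f' p) * ∏ p ∈ t, g' p) :=
        mul_le_mul_of_nonneg_left hle (prod_nonneg hnonneg)
    _ = (∏ p ∈ s \ t, f' p) * (∏ p ∈ t, f' p) * ((∏ p ∈ s \ t, g' p) * ∏ p ∈ t, g' p) := by
        rw [prod_congr rfl heq, prod_mul_distrib]; ring

lemma prod_ltPairs_sub_mul_le {N : ℕ} {i h r : Fin N} (hih : i < h) (hhr : h < r)
    {u u' v v' : Fin N → ℤ} (hu : u = v + Pi.single r 1) (hu' : u' = v' + Pi.single r 1)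
    (hmove : u' = u + Pi.single h 1 - Pi.single i 1) (hu_anti : StrictAnti u)
    (hv'_anti : StrictAnti v') :
    (∏ p ∈ ltPairs N, (u p.1 - u p.2)) * ∏ p ∈ ltPairs N, (v' p.1 - v' p.2) ≤
      (∏ p ∈ ltPairs N, (u' p.1 - u' p.2)) * ∏ p ∈ ltPairs N, (v p.1 - v p.2) := by
  have hv' : v' = v + Pi.single h 1 - Pi.single i 1 := by
    ext a
    have := congrFun hu a; have := congrFun hu' a; have := congrFun hmove a
    simp only [Pi.add_apply, Pi.sub_apply] at *
    linarith
  have eq_off_r : ∀ a, a ≠ r → u a = v a ∧ u' a = v' a := fun a ha => by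
    simp [hu, hu', ha]
  have eq_off_hi : ∀ a, a ≠ h → a ≠ i → v' a = v a ∧ u' a = u a := fun a ha ha' => by
    simp [hu, hu', hv', Pi.single_apply, ha, ha']
  have hir : i < r := hih.trans hhr
  refine prod_mul_prod_le_prod_mul_prod (t := {(i, r), (h, r)}) ?_ ?_ ?_ ?_
  · simp [insert_subset_iff, hir, hhr]
  · rintro ⟨a, b⟩ hab
    simp only [mem_ltPairs, mem_sdiff, mem_insert, mem_singleton,
      Prod.mk.injEq, not_or, not_and] at hab
    obtain ⟨hab, hir', hhr'⟩ := hab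
    by_cases har : a ≠ r ∧ b ≠ r
    · rw [(eq_off_r a har.1).1, (eq_off_r b har.2).1, (eq_off_r a har.1).2, (eq_off_r b har.2).2]
      ring
    · -- a pair through `r` avoids `h` and `i`, where the move of `v` to `v'` takes place
      have ha : a ≠ h ∧ a ≠ i := by
        constructor <;> rintro rfl <;> grind
      have hb : b ≠ h ∧ b ≠ i := by
        constructor <;> rintro rfl <;> grind
      rw [(eq_off_hi a ha.1 ha.2).1, (eq_off_hi b hb.1 hb.2).1, (eq_off_hi a ha.1 ha.2).2,
        (eq_off_hi b hb.1 hb.2).2]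
  · rintro ⟨a, b⟩ hab
    simp only [mem_ltPairs, mem_sdiff] at hab
    exact mul_nonneg (sub_nonneg.2 (hu_anti hab.1).le) (sub_nonneg.2 (hv'_anti hab.1).le)
  · have hne : ((i, r) : Fin N × Fin N) ≠ (h, r) := by simp [hih.ne]
    have huhr := hu_anti hhr
    have hv'ih := hv'_anti hih
    subst hu hu' hv'
    simp only [prod_pair hne, Pi.add_apply, Pi.sub_apply, Pi.single_apply, hih.ne, hir.ne,
      hhr.ne, hih.ne', hir.ne', hhr.ne', if_true, if_false] at huhr hv'ih ⊢
    nlinarith [mul_nonneg (sub_nonneg.2 huhr.le) (sub_nonneg.2 hv'ih.le)]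

section ShiftedParts

variable {N : ℕ} {f g : ℕ → ℕ}

lemma shiftedParts_strictAnti (hf : Antitone f) : StrictAnti fun a => (shiftedParts N f a : ℤ) := by
  intro a b hab
  have := hf (Fin.le_iff_val_le_val.1 hab.le)
  have := b.isLt
  have : (a : ℕ) < b := hab
  simp only [shiftedParts, Nat.cast_lt]
  omega

lemma shiftedParts_update {r : ℕ} (hr : r < N) :
    (fun a => (shiftedParts N (Function.update f r (f r + 1)) a : ℤ)) =
      (fun a => (shiftedParts N f a : ℤ)) + Pi.single ⟨r, hr⟩ 1 := by
  funext a
  by_cases ha : (a : ℕ) = r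
  · subst ha
    simp only [shiftedParts, Function.update_self, Fin.eta, Pi.add_apply, Pi.single_eq_same]
    push_cast
    ring
  · simp [shiftedParts, Fin.ext_iff, ha]

lemma shiftedParts_of_moveBox {i h : ℕ} (hmove : moveBox f g i h) (hi : i < N) (hh : h < N) :
    (fun a => (shiftedParts N g a : ℤ)) =
      (fun a => (shiftedParts N f a : ℤ)) + Pi.single ⟨h, hh⟩ 1 - Pi.single ⟨i, hi⟩ 1 := by
  obtain ⟨hfi, hgh, hrest⟩ := hmove
  funext a
  simp only [shiftedParts, Pi.add_apply, Pi.sub_apply, Pi.single_apply, Fin.ext_iff]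
  have hih : i ≠ h := by rintro rfl; omega
  by_cases hah : (a : ℕ) = h
  · simp only [hah, hih.symm, hgh, if_true, if_false]
    push_cast
    ring
  by_cases hai : (a : ℕ) = i
  · simp only [hai, hih, hfi, if_true, if_false]
    push_cast
    ring
  · simp [hah, hai, hrest a hai hah]

end ShiftedParts

theorem schur_ones_monotonicity_r_gt_hi_general (N i hi r : ℕ)
    (lam hatlam mu hatmu : ℕ → ℕ)
    (hlam : isPartition lam) (hhatlam : isPartition hatlam)
    (hmu : isPartition mu) (hhatmu : isPartition hatmu)
    (hmove : moveBox lam hatlam i hi)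
    (hihi : i < hi)
    (hadd : lam = Function.update mu r (mu r + 1))
    (haddhat : hatlam = Function.update hatmu r (hatmu r + 1))
    (hr : hi < r)
    (hN : ∀ a, N ≤ a → hatlam a = 0) :
    schurOnes N lam * schurOnes N hatmu ≤ schurOnes N hatlam * schurOnes N mu := by
  have hrN : r < N := by
    by_contra! h
    simpa [haddhat] using hN r h
  have hlam0 : ∀ a, N ≤ a → lam a = 0 := fun a ha =>
    (hmove.2.2 a (by omega) (by omega)).trans (hN a ha)
  have hmu0 : ∀ a, N ≤ a → mu a = 0 := fun a ha => by
    simpa [hadd, Function.update_of_ne (show a ≠ r by omega)] using hlam0 a ha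
  have hhatmu0 : ∀ a, N ≤ a → hatmu a = 0 := fun a ha => by
    simpa [haddhat, Function.update_of_ne (show a ≠ r by omega)] using hN a ha
  have key := prod_ltPairs_sub_mul_le (i := ⟨i, by omega⟩) (h := ⟨hi, by omega⟩) (r := ⟨r, hrN⟩)
    hihi hr (hadd ▸ shiftedParts_update hrN) (haddhat ▸ shiftedParts_update hrN)
    (shiftedParts_of_moveBox hmove _ _) (shiftedParts_strictAnti hlam.1)
    (shiftedParts_strictAnti hhatmu.1)
  rw [← schurOnes_mul_prod_factorial hlam.1 hlam0, ← schurOnes_mul_prod_factorial hhatmu.1 hhatmu0,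
    ← schurOnes_mul_prod_factorial hhatlam.1 hN, ← schurOnes_mul_prod_factorial hmu.1 hmu0] at key
  have hK : 0 < (∏ b : Fin N, ((b : ℕ).factorial : ℤ)) ^ 2 := by positivity
  have : ((schurOnes N lam * schurOnes N hatmu : ℕ) : ℤ) ≤ schurOnes N hatlam * schurOnes N mu := by
    refine le_of_mul_le_mul_right ?_ hK
    push_cast
    linear_combination key
  exact_mod_cast this

theorem schur_ones_monotonicity_r_gt_hi (n N i hi r : ℕ)
    (lam hatlam mu hatmu : ℕ → ℕ)
    (hlam : isPartition lam) (hhatlam : isPartition hatlam)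
    (hmu : isPartition mu) (hhatmu : isPartition hatmu)
    (hslam : psize lam = n) (hshatlam : psize hatlam = n)
    (hsmu : psize mu = n - 1) (hshatmu : psize hatmu = n - 1)
    (hmove : moveBox lam hatlam i hi) (hmovemu : moveBox mu hatmu i hi)
    (hihi : i < hi)
    (hadd : lam = Function.update mu r (mu r + 1))
    (haddhat : hatlam = Function.update hatmu r (hatmu r + 1))
    (hr : hi < r)
    (hN : ∀ a, N ≤ a → hatlam a = 0) :
    schurOnes N lam * schurOnes N hatmu ≤ schurOnes N hatlam * schurOnes N mu :=
  schur_ones_monotonicity_r_gt_hi_general N i hi r lam hatlam mu hatmu hlam hhatlam hmu hhatmu hmove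
    hihi hadd haddhat hr hN
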